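/- arXiv:2212.07365 — 2 statements merged into one kernel-verified Lean document; each statement's English description precedes it below -/
import Mathlib

section
/- Let m be a positive integer, let μ_l, μ_k ∈ ℝ^m with μ_l ≠ μ_k (i.e., there exists an index i with μ_{li} ≠ μ_{ki}), and let α_l, α_k ∈ (0,∞)^m be fixed strictly positive base steepness vectors. Then for every y ∈ ℝ^m, the product P(y; μ_l, tα_l)·P(y; μ_k, tα_k) converges to 0 exponentially as the steepness goes to infinity: there exist constants C, c > 0 such that P(y; μ_l, tα_l)·P(y; μ_k, tα_k) ≤ C·exp(−c·t) for all t ≥ 1. -/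
open MeasureTheory ProbabilityTheory Real

noncomputable def logisticFun (y μ α : ℝ) : ℝ := 1 / (1 + Real.exp (-α * (y - μ)))

noncomputable def rbfFun (y μ α : ℝ) : ℝ :=
  Real.exp (-α * (y - μ)) / (1 + Real.exp (-α * (y - μ))) ^ 2

noncomputable def conjLog {m : ℕ} (y μ α : Fin m → ℝ) : ℝ :=
  ∏ i, logisticFun (y i) (μ i) (α i)

noncomputable def conjRBF {m : ℕ} (y μ α : Fin m → ℝ) : ℝ :=
  ∏ i, rbfFun (y i) (μ i) (α i)

open scoped Classical in
/-- Decision function `H(y; (μl, αl), (μk, αk))`. -/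
noncomputable def decisionH {m : ℕ} (y μl αl μk αk : Fin m → ℝ) : ℝ :=
  if ∀ i, μl i < μk i then conjRBF y μk αk else 0

/-! A single RBF factor is at most `exp (-|α (y - μ)|)`: for `α (y - μ) ≥ 0` this is
`e^{-x} / (1 + e^{-x})² ≤ e^{-x}`, and the RBF is even in `α`. A conjunctive RBF is bounded by
any of its factors, so along steepness `t α` it decays like `exp (-|α i (y i - μ i)| t)` in every
coordinate `i` where `y i ≠ μ i`. Since `μl ≠ μk`, some coordinate `y i` differs from `μl i` or
from `μk i`, and the product of the two conjunctive RBFs is bounded by the corresponding one. -/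

lemma rbfFun_nonneg (y μ α : ℝ) : 0 ≤ rbfFun y μ α := by
  unfold rbfFun
  positivity

lemma rbfFun_le_one (y μ α : ℝ) : rbfFun y μ α ≤ 1 := by
  unfold rbfFun
  rw [div_le_one (by positivity)]
  nlinarith [Real.exp_pos (-α * (y - μ))]

lemma rbfFun_neg_steepness (y μ α : ℝ) : rbfFun y μ (-α) = rbfFun y μ α := by
  unfold rbfFun
  rw [neg_neg, neg_mul, Real.exp_neg]
  have := Real.exp_pos (α * (y - μ))
  field_simp
  ring

lemma rbfFun_le_exp (y μ α : ℝ) : rbfFun y μ α ≤ Real.exp (-α * (y - μ)) :=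
  div_le_self (Real.exp_pos _).le (one_le_pow₀ (by linarith [Real.exp_pos (-α * (y - μ))]))

lemma rbfFun_le_exp_neg_abs (y μ α : ℝ) : rbfFun y μ α ≤ Real.exp (-|α * (y - μ)|) := by
  rcases le_total 0 (α * (y - μ)) with h | h
  · rw [abs_of_nonneg h, ← neg_mul]
    exact rbfFun_le_exp y μ α
  · rw [abs_of_nonpos h, neg_neg, ← rbfFun_neg_steepness]
    simpa using rbfFun_le_exp y μ (-α)

lemma conjRBF_nonneg {m : ℕ} (y μ α : Fin m → ℝ) : 0 ≤ conjRBF y μ α :=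
  Finset.prod_nonneg fun _ _ => rbfFun_nonneg _ _ _

lemma conjRBF_le_one {m : ℕ} (y μ α : Fin m → ℝ) : conjRBF y μ α ≤ 1 :=
  Finset.prod_le_one (fun _ _ => rbfFun_nonneg _ _ _) fun _ _ => rbfFun_le_one _ _ _

lemma conjRBF_le_rbfFun {m : ℕ} (y μ α : Fin m → ℝ) (i : Fin m) :
    conjRBF y μ α ≤ rbfFun (y i) (μ i) (α i) := by
  unfold conjRBF
  rw [← Finset.mul_prod_erase Finset.univ _ (Finset.mem_univ i)]
  exact mul_le_of_le_one_right (rbfFun_nonneg _ _ _)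
    (Finset.prod_le_one (fun _ _ => rbfFun_nonneg _ _ _) fun _ _ => rbfFun_le_one _ _ _)

lemma conjRBF_mul_steepness_le_exp {m : ℕ} (y μ α : Fin m → ℝ) (i : Fin m) {t : ℝ}
    (ht : 0 ≤ t) :
    conjRBF y μ (fun j => t * α j) ≤ Real.exp (-|α i * (y i - μ i)| * t) := by
  calc conjRBF y μ (fun j => t * α j)
      ≤ Real.exp (-|t * α i * (y i - μ i)|) := (conjRBF_le_rbfFun _ _ _ i).trans
        (rbfFun_le_exp_neg_abs _ _ _)
    _ = Real.exp (-|α i * (y i - μ i)| * t) := by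
        rw [mul_assoc, abs_mul, abs_of_nonneg ht]
        ring_nf

lemma exists_conjRBF_mul_steepness_le_exp {m : ℕ} (y μ α : Fin m → ℝ) {i : Fin m}
    (hα : α i ≠ 0) (hy : y i ≠ μ i) :
    ∃ c, 0 < c ∧ ∀ t : ℝ, 0 ≤ t → conjRBF y μ (fun j => t * α j) ≤ Real.exp (-c * t) :=
  ⟨|α i * (y i - μ i)|, abs_pos.mpr (mul_ne_zero hα (sub_ne_zero.mpr hy)),
    fun _ ht => conjRBF_mul_steepness_le_exp y μ α i ht⟩

theorem rbf_mul_rbf_exp_decay_of_center_ne_general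
    (m : ℕ) (μl μk αl αk : Fin m → ℝ)
    (hμ : μl ≠ μk)
    (hαl : ∀ i, 0 < αl i) (hαk : ∀ i, 0 < αk i) :
    ∀ y : Fin m → ℝ, ∃ C c : ℝ, 0 < C ∧ 0 < c ∧ ∀ t : ℝ, 1 ≤ t →
      conjRBF y μl (fun i => t * αl i) * conjRBF y μk (fun i => t * αk i)
        ≤ C * Real.exp (-c * t) := by
  intro y
  obtain ⟨i, hi⟩ := Function.ne_iff.mp hμ
  obtain ⟨c, hc, hdecay⟩ : ∃ c, 0 < c ∧ ∀ t : ℝ, 0 ≤ t →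
      conjRBF y μl (fun j => t * αl j) * conjRBF y μk (fun j => t * αk j)
        ≤ Real.exp (-c * t) := by
    rcases ne_or_eq (y i) (μl i) with hyl | hyl
    · obtain ⟨c, hc, h⟩ := exists_conjRBF_mul_steepness_le_exp y μl αl (hαl i).ne' hyl
      exact ⟨c, hc, fun t ht => (mul_le_of_le_one_right (conjRBF_nonneg _ _ _)
        (conjRBF_le_one _ _ _)).trans (h t ht)⟩
    · obtain ⟨c, hc, h⟩ := exists_conjRBF_mul_steepness_le_exp y μk αk (hαk i).ne' (hyl ▸ hi)
      exact ⟨c, hc, fun t ht => (mul_le_of_le_one_left (conjRBF_nonneg _ _ _)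
        (conjRBF_le_one _ _ _)).trans (h t ht)⟩
  exact ⟨1, c, one_pos, hc, fun t ht => by simpa using hdecay t (by linarith)⟩

theorem rbf_mul_rbf_exp_decay_of_center_ne
    (m : ℕ) (hm : 0 < m) (μl μk αl αk : Fin m → ℝ)
    (hμ : μl ≠ μk)
    (hαl : ∀ i, 0 < αl i) (hαk : ∀ i, 0 < αk i) :
    ∀ y : Fin m → ℝ, ∃ C c : ℝ, 0 < C ∧ 0 < c ∧ ∀ t : ℝ, 1 ≤ t →
      conjRBF y μl (fun i => t * αl i) * conjRBF y μk (fun i => t * αk i)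
        ≤ C * Real.exp (-c * t) :=
  rbf_mul_rbf_exp_decay_of_center_ne_general m μl μk αl αk hμ hαl hαk
end

section
/- Let m be a positive integer, let y, μ_l, μ_j ∈ ℝ^m, and let α_l, α_j ∈ (0,∞)^m be fixed strictly positive base steepness vectors. Assume that y_i ≠ μ_{li} and y_i ≠ μ_{ji} for every i = 1, …, m. Define the componentwise-maximum parameters μ*_i := max(μ_{li}, μ_{ji}) and α*_i := α_{li} if μ_{li} ≥ μ_{ji} and α*_i := α_{ji} otherwise. Then the product of the two conjunctive logistic functions satisfies: Λ(y; μ_l, tα_l)·Λ(y; μ_j, tα_j) − Λ(y; μ*, tα*) converges to 0 exponentially as the steepness goes to infinity, i.e., there exist constants C, c > 0 such that |Λ(y; μ_l, tα_l)·Λ(y; μ_j, tα_j) − Λ(y; μ*, tα*)| ≤ C·exp(−c·t) for all t ≥ 1. -/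
open MeasureTheory ProbabilityTheory Real

open Topology

theorem norm_prod_sub_prod_le_sum {ι R : Type*} [NormedCommRing R] [NormOneClass R]
    (s : Finset ι) (a b : ι → R) (ha : ∀ i ∈ s, ‖a i‖ ≤ 1) (hb : ∀ i ∈ s, ‖b i‖ ≤ 1) :
    ‖∏ i ∈ s, a i - ∏ i ∈ s, b i‖ ≤ ∑ i ∈ s, ‖a i - b i‖ := by
  classical
  induction s using Finset.induction with
  | empty => simp
  | @insert j s hj ih =>
    simp only [Finset.forall_mem_insert] at ha hb
    rw [Finset.prod_insert hj, Finset.prod_insert hj, Finset.sum_insert hj]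
    have hprod : ‖∏ i ∈ s, a i‖ ≤ 1 :=
      (Finset.norm_prod_le s a).trans (Finset.prod_le_one (fun _ _ => norm_nonneg _) ha.2)
    calc ‖a j * ∏ i ∈ s, a i - b j * ∏ i ∈ s, b i‖
        = ‖(a j - b j) * ∏ i ∈ s, a i + b j * (∏ i ∈ s, a i - ∏ i ∈ s, b i)‖ := by ring_nf
      _ ≤ ‖a j - b j‖ * 1 + 1 * ∑ i ∈ s, ‖a i - b i‖ := by
        refine (norm_add_le _ _).trans (add_le_add ?_ ?_) <;> refine (norm_mul_le _ _).trans ?_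
        · gcongr
        · exact mul_le_mul hb.1 (ih ha.2 hb.2) (norm_nonneg _) zero_le_one
      _ = ‖a j - b j‖ + ∑ i ∈ s, ‖a i - b i‖ := by ring

theorem exists_pos_forall_le_of_finite {ι : Type*} [Finite ι] (g : ι → ℝ) (hg : ∀ i, 0 < g i) :
    ∃ c, 0 < c ∧ ∀ i, c ≤ g i := by
  have hle : ∀ᶠ c in 𝓝[>] (0 : ℝ), ∀ i, c ≤ g i :=
    Filter.eventually_all.2 fun i => (eventually_le_nhds (hg i)).filter_mono nhdsWithin_le_nhds
  obtain ⟨c, hc, hcg⟩ := ((eventually_mem_nhdsWithin (a := (0 : ℝ)) (s := Set.Ioi 0)).and hle).exists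
  exact ⟨c, hc, hcg⟩

theorem logisticFun_nonneg (y μ α : ℝ) : 0 ≤ logisticFun y μ α := by
  unfold logisticFun; positivity

theorem one_sub_logisticFun (y μ α : ℝ) : 1 - logisticFun y μ α = logisticFun μ y α := by
  unfold logisticFun
  rw [show -α * (μ - y) = -(-α * (y - μ)) by ring, exp_neg]
  field_simp
  ring

theorem logisticFun_le_one (y μ α : ℝ) : logisticFun y μ α ≤ 1 := by
  linarith [one_sub_logisticFun y μ α, logisticFun_nonneg μ y α]

theorem abs_logisticFun_le_one (y μ α : ℝ) : |logisticFun y μ α| ≤ 1 :=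
  abs_le.2 ⟨by linarith [logisticFun_nonneg y μ α], logisticFun_le_one y μ α⟩

theorem logisticFun_le_exp (y μ α : ℝ) : logisticFun y μ α ≤ exp (α * (y - μ)) := by
  calc logisticFun y μ α ≤ 1 / exp (-α * (y - μ)) := by
        unfold logisticFun
        exact one_div_le_one_div_of_le (exp_pos _) (by linarith [exp_pos 0])
    _ = exp (α * (y - μ)) := by rw [one_div, ← exp_neg]; ring_nf

theorem logisticFun_mul_one_sub_logisticFun_le {y μ μ' : ℝ} (α β : ℝ) (hμ : μ' ≤ μ) :
    logisticFun y μ α * (1 - logisticFun y μ' β) ≤ exp (-min (α * |y - μ|) (β * |y - μ'|)) := by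
  have hnonneg := logisticFun_nonneg y μ α
  rcases le_or_gt y μ with hy | hy
  · calc logisticFun y μ α * (1 - logisticFun y μ' β) ≤ logisticFun y μ α * 1 := by
          gcongr; linarith [logisticFun_nonneg y μ' β]
      _ ≤ exp (α * (y - μ)) := by simpa using logisticFun_le_exp y μ α
      _ ≤ _ := by
          rw [abs_of_nonpos (by linarith)]
          exact exp_le_exp.2 (by linarith [min_le_left (α * -(y - μ)) (β * |y - μ'|)])
  · calc logisticFun y μ α * (1 - logisticFun y μ' β) ≤ 1 * logisticFun μ' y β := by
          rw [one_sub_logisticFun]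
          gcongr
          · exact logisticFun_nonneg μ' y β
          · exact logisticFun_le_one y μ α
      _ ≤ exp (β * (μ' - y)) := by simpa using logisticFun_le_exp μ' y β
      _ ≤ _ := by
          rw [abs_of_pos (show 0 < y - μ' by linarith)]
          exact exp_le_exp.2 (by linarith [min_le_right (α * |y - μ|) (β * (y - μ'))])

theorem abs_logisticFun_mul_sub_logisticFun_max_le (y μ μ' α β : ℝ) :
    |logisticFun y μ α * logisticFun y μ' β
        - logisticFun y (max μ μ') (if μ' ≤ μ then α else β)|
      ≤ exp (-min (α * |y - μ|) (β * |y - μ'|)) := by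
  split_ifs with hμ
  · rw [max_eq_left hμ, abs_sub_comm, abs_of_nonneg (by
      nlinarith [logisticFun_nonneg y μ α, logisticFun_le_one y μ' β])]
    simpa [mul_sub] using logisticFun_mul_one_sub_logisticFun_le α β hμ
  · rw [max_eq_right (le_of_not_ge hμ), abs_sub_comm, abs_of_nonneg (by
      nlinarith [logisticFun_nonneg y μ' β, logisticFun_le_one y μ α]), min_comm]
    simpa [mul_sub, mul_comm] using logisticFun_mul_one_sub_logisticFun_le β α (le_of_not_ge hμ)

theorem abs_conjLog_mul_conjLog_sub_conjLog_max_le {m : ℕ} (y μ μ' α β : Fin m → ℝ) :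
    |conjLog y μ α * conjLog y μ' β
        - conjLog y (fun i => max (μ i) (μ' i)) (fun i => if μ' i ≤ μ i then α i else β i)|
      ≤ ∑ i, exp (-min (α i * |y i - μ i|) (β i * |y i - μ' i|)) := by
  rw [conjLog, conjLog, conjLog, ← Finset.prod_mul_distrib, ← Real.norm_eq_abs]
  refine (norm_prod_sub_prod_le_sum _ _ _ (fun i _ => ?_) fun i _ => abs_logisticFun_le_one ..).trans
    (Finset.sum_le_sum fun i _ => abs_logisticFun_mul_sub_logisticFun_max_le ..)
  exact (abs_mul _ _).trans_le
    (mul_le_one₀ (abs_logisticFun_le_one ..) (abs_nonneg _) (abs_logisticFun_le_one ..))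

theorem logistic_mul_logistic_sub_logistic_max_exp_decay_general
    (m : ℕ) (y μl μj αl αj : Fin m → ℝ)
    (hαl : ∀ i, 0 < αl i) (hαj : ∀ i, 0 < αj i)
    (hyl : ∀ i, y i ≠ μl i) (hyj : ∀ i, y i ≠ μj i) :
    ∃ C c : ℝ, 0 < C ∧ 0 < c ∧ ∀ t : ℝ, 1 ≤ t →
      |conjLog y μl (fun i => t * αl i) * conjLog y μj (fun i => t * αj i)
          - conjLog y (fun i => max (μl i) (μj i))
              (fun i => t * (if μj i ≤ μl i then αl i else αj i))|
        ≤ C * Real.exp (-c * t) := by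
  obtain ⟨c, hc, hcle⟩ := exists_pos_forall_le_of_finite
    (fun i => min (αl i * |y i - μl i|) (αj i * |y i - μj i|)) fun i =>
      lt_min (mul_pos (hαl i) (abs_pos.2 (sub_ne_zero.2 (hyl i))))
        (mul_pos (hαj i) (abs_pos.2 (sub_ne_zero.2 (hyj i))))
  refine ⟨m + 1, c, by positivity, hc, fun t ht => ?_⟩
  simp only [mul_ite]
  calc _ ≤ ∑ i, exp (-min (t * αl i * |y i - μl i|) (t * αj i * |y i - μj i|)) :=
        abs_conjLog_mul_conjLog_sub_conjLog_max_le ..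
    _ ≤ ∑ _ : Fin m, exp (-c * t) := Finset.sum_le_sum fun i _ => exp_le_exp.2 <| by
        rw [mul_assoc, mul_assoc, ← mul_min_of_nonneg _ _ (by linarith)]
        nlinarith [hcle i]
    _ ≤ (m + 1) * exp (-c * t) := by
        rw [Finset.sum_const, Finset.card_univ, Fintype.card_fin, nsmul_eq_mul]
        gcongr
        linarith

theorem logistic_mul_logistic_sub_logistic_max_exp_decay
    (m : ℕ) (hm : 0 < m) (y μl μj αl αj : Fin m → ℝ)
    (hαl : ∀ i, 0 < αl i) (hαj : ∀ i, 0 < αj i)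
    (hyl : ∀ i, y i ≠ μl i) (hyj : ∀ i, y i ≠ μj i) :
    ∃ C c : ℝ, 0 < C ∧ 0 < c ∧ ∀ t : ℝ, 1 ≤ t →
      |conjLog y μl (fun i => t * αl i) * conjLog y μj (fun i => t * αj i)
          - conjLog y (fun i => max (μl i) (μj i))
              (fun i => t * (if μj i ≤ μl i then αl i else αj i))|
        ≤ C * Real.exp (-c * t) :=
  logistic_mul_logistic_sub_logistic_max_exp_decay_general m y μl μj αl αj hαl hαj hyl hyj
end
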